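/- arXiv:2511.18647 — 6 statements merged into one kernel-verified Lean document; each statement's English description precedes it below -/
import Mathlib

section
/- Let Ω be a finite set and let D ⊆ ℝ^|Ω| be a linear subspace such that every d ∈ D has coordinates summing to zero. Then there exists a finite message set Σ and a stochastic map E : Ω → Δ(Σ) whose induced linear map on ℝ^|Ω| has kernel exactly D. -/
/-- An experiment `E : Ω → Δ(Σ)`: each row `E ω` is a probability distribution on `Σ`. -/
def IsStochastic {Ω S : Type*} [Fintype Ω] [Fintype S] (E : Ω → S → ℝ) : Prop :=
  (∀ ω σ, 0 ≤ E ω σ) ∧ ∀ ω, ∑ σ, E ω σ = 1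

/-- every linear subspace `D` of `ℝ^|Ω|` all of whose elements have
coordinates summing to zero is the kernel of (the linear extension of) some
stochastic experiment with a finite message set. -/
theorem stmt1 {Ω : Type*} [Fintype Ω] (D : Submodule ℝ (Ω → ℝ))
    (hD : ∀ d ∈ D, ∑ ω, d ω = 0) :
    ∃ (n : ℕ) (E : Ω → Fin n → ℝ), IsStochastic E ∧
      ∀ v : Ω → ℝ, (∀ σ, ∑ ω, E ω σ * v ω = 0) ↔ v ∈ D := by
  classical
  set Q := (Ω → ℝ) ⧸ D
  set m := Module.finrank ℝ Q with hm
  let b : Module.Basis (Fin m) ℝ Q := Module.finBasis ℝ Q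
  let f : Fin m → ((Ω → ℝ) →ₗ[ℝ] ℝ) := fun i => (b.coord i).comp D.mkQ
  let w : Fin m → Ω → ℝ := fun i ω => f i (fun j => if ω = j then 1 else 0)
  have hfw : ∀ i v, f i v = ∑ ω, v ω * w i ω := by
    intro i v
    simpa [smul_eq_mul, w] using (f i).pi_apply_eq_sum_univ v
  set C : ℝ := 1 + ∑ i, ∑ ω, |w i ω| with hC
  have hCpos : 0 < C := by
    have : (0:ℝ) ≤ ∑ i, ∑ ω, |w i ω| :=
      Finset.sum_nonneg fun i _ => Finset.sum_nonneg fun ω _ => abs_nonneg _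
    linarith
  have hC0 : C ≠ 0 := ne_of_gt hCpos
  have hwle : ∀ i ω, |w i ω| ≤ C := by
    intro i ω
    have h1 : |w i ω| ≤ ∑ ω, |w i ω| :=
      Finset.single_le_sum (fun ω _ => abs_nonneg (w i ω)) (Finset.mem_univ ω)
    have h2 : ∑ ω, |w i ω| ≤ ∑ i, ∑ ω, |w i ω| :=
      Finset.single_le_sum (f := fun i => ∑ ω, |w i ω|)
        (fun i _ => Finset.sum_nonneg fun ω _ => abs_nonneg _) (Finset.mem_univ i)
    linarith
  set g : Ω → Fin m → ℝ := fun ω i => (1 + w i ω / C) / (2 * (m + 1)) with hg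
  have hden : (0:ℝ) < 2 * (m + 1) := by positivity
  have hd0 : (2 * ((m:ℝ) + 1)) ≠ 0 := ne_of_gt hden
  have hb : ∀ ω i, -1 ≤ w i ω / C ∧ w i ω / C ≤ 1 := by
    intro ω i
    have h := abs_le.mp (hwle i ω)
    constructor
    · rw [le_div_iff₀ hCpos]; linarith
    · rw [div_le_one hCpos]; linarith
  have hg0 : ∀ ω i, 0 ≤ g ω i := by
    intro ω i
    have := (hb ω i).1
    apply div_nonneg _ (le_of_lt hden); linarith
  have hg1 : ∀ ω i, g ω i ≤ 1 / (m + 1) := by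
    intro ω i
    have h1 := (hb ω i).2
    rw [hg, div_le_div_iff₀ hden (by positivity : (0:ℝ) < (m:ℝ) + 1)]
    nlinarith [Nat.cast_nonneg (α := ℝ) m]
  have hsum : ∀ ω, ∑ i, g ω i ≤ 1 := by
    intro ω
    calc ∑ i, g ω i ≤ ∑ _i : Fin m, 1 / ((m:ℝ) + 1) :=
          Finset.sum_le_sum fun i _ => hg1 ω i
      _ = m / (m + 1) := by simp [Finset.sum_const]; ring
      _ ≤ 1 := by rw [div_le_one (by positivity)]; linarith
  set E : Ω → Fin (m + 1) → ℝ := fun ω => Fin.snoc (g ω) (1 - ∑ i, g ω i) with hE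
  have hrow : ∀ ω, ∑ σ, E ω σ = 1 := by
    intro ω
    rw [Fin.sum_univ_castSucc]
    simp [hE]
  have key : ∀ v i, ∑ ω, E ω (Fin.castSucc i) * v ω
      = ((∑ ω, v ω) + (f i v) / C) / (2 * (m + 1)) := by
    intro v i
    rw [hfw]
    simp only [hE, Fin.snoc_castSucc, hg]
    rw [Finset.sum_div _ _ C, ← Finset.sum_add_distrib, Finset.sum_div]
    apply Finset.sum_congr rfl
    intro ω _
    field_simp
  refine ⟨m + 1, E, ⟨?_, hrow⟩, ?_⟩
  · intro ω σ
    refine Fin.lastCases ?_ ?_ σ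
    · simp only [hE, Fin.snoc_last]; linarith [hsum ω]
    · intro i; simp only [hE, Fin.snoc_castSucc]; exact hg0 ω i
  · intro v
    constructor
    · intro h
      have hS : ∑ ω, v ω = 0 := by
        have h0 : (0:ℝ) = ∑ σ, ∑ ω, E ω σ * v ω :=
          (Finset.sum_eq_zero fun σ _ => h σ).symm
        rw [Finset.sum_comm] at h0
        have : ∑ ω, ∑ σ, E ω σ * v ω = ∑ ω, v ω := by
          apply Finset.sum_congr rfl
          intro ω _
          rw [← Finset.sum_mul, hrow ω, one_mul]
        rw [this] at h0
        exact h0.symm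
      have hfi : ∀ i, f i v = 0 := by
        intro i
        have := h (Fin.castSucc i)
        rw [key v i, hS] at this
        rw [div_eq_zero_iff] at this
        rcases this with h' | h'
        · rw [zero_add, div_eq_zero_iff] at h'
          rcases h' with h'' | h''
          · exact h''
          · exact absurd h'' hC0
        · exact absurd h' hd0
      have hq : D.mkQ v = 0 := by
        apply b.forall_coord_eq_zero_iff.mp
        intro i
        exact hfi i
      rwa [Submodule.mkQ_apply, Submodule.Quotient.mk_eq_zero] at hq
    · intro hv σ
      have hS : ∑ ω, v ω = 0 := hD v hv
      have hq : D.mkQ v = 0 := by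
        rw [Submodule.mkQ_apply, Submodule.Quotient.mk_eq_zero]; exact hv
      have hfi : ∀ i, f i v = 0 := by
        intro i
        show b.coord i (D.mkQ v) = 0
        rw [hq, map_zero]
      refine Fin.lastCases ?_ ?_ σ
      · have hcol : ∀ i, ∑ ω, g ω i * v ω = 0 := by
          intro i
          have := key v i
          simp only [hE, Fin.snoc_castSucc] at this
          rw [this, hS, hfi i, zero_div, add_zero, zero_div]
        simp only [hE, Fin.snoc_last, sub_mul, one_mul]
        rw [Finset.sum_sub_distrib, hS]
        have : ∑ ω, (∑ i, g ω i) * v ω = 0 := by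
          simp_rw [Finset.sum_mul]
          rw [Finset.sum_comm]
          exact Finset.sum_eq_zero fun i _ => hcol i
        rw [this]; ring
      · intro i
        rw [key v i, hS, hfi i, zero_div, add_zero, zero_div]
end

section
/- In the prior-free information design model satisfying the payoff-irrelevance assumption, an action α is implementable by some information structure if and only if there exists a supporting prior ν ∈ P, i.e., a prior ν such that (i) ⟨α, ν⟩ ≥ ⟨β, ν⟩ for all actions β and (ii) ⟨α, μ⟩ ≥ ⟨α, ν⟩. -/
open Finset

/-- Kernel of the linear extension of an experiment. -/
def kerSet {Ω S : Type*} [Fintype Ω] [Fintype S] (E : Ω → S → ℝ) : Set (Ω → ℝ) :=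
  {v | ∀ σ, ∑ ω, E ω σ * v ω = 0}

/-- Expected payoff `⟨α, ν⟩` of mixed action `α` against prior `ν`. -/
def pay {A Ω : Type*} [Fintype A] [Fintype Ω] (u : A → Ω → ℝ) (α : A → ℝ) (ν : Ω → ℝ) : ℝ :=
  ∑ a, ∑ ω, α a * (u a ω * ν ω)

/-- The identified set `P(Σ,E) = {ν ∈ P : Eν = Eμ}`. -/
def identified {Ω S : Type*} [Fintype Ω] [Fintype S] (P : Set (Ω → ℝ)) (μ : Ω → ℝ)
    (E : Ω → S → ℝ) : Set (Ω → ℝ) :=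
  {ν ∈ P | ∀ σ, ∑ ω, E ω σ * ν ω = ∑ ω, E ω σ * μ ω}

/-- `(Σ,E)` implements `α`: `α` solves the decision maker's maxmin problem under `E`. -/
def Implements {A Ω S : Type*} [Fintype A] [Fintype Ω] [Fintype S]
    (u : A → Ω → ℝ) (P : Set (Ω → ℝ)) (μ : Ω → ℝ) (E : Ω → S → ℝ) (α : A → ℝ) : Prop :=
  α ∈ stdSimplex ℝ A ∧
    ∀ β ∈ stdSimplex ℝ A,
      sInf (pay u β '' identified P μ E) ≤ sInf (pay u α '' identified P μ E)

/-- `α` is implementable by some information structure. -/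
def Implementable {A Ω : Type*} [Fintype A] [Fintype Ω]
    (u : A → Ω → ℝ) (P : Set (Ω → ℝ)) (μ : Ω → ℝ) (α : A → ℝ) : Prop :=
  ∃ (n : ℕ) (E : Ω → Fin n → ℝ), IsStochastic E ∧ Implements u P μ E α

/-- `ν` supports `α`: `α` is expected-utility optimal under `ν` and `⟨α,μ⟩ ≥ ⟨α,ν⟩`. -/
def Supports {A Ω : Type*} [Fintype A] [Fintype Ω]
    (u : A → Ω → ℝ) (P : Set (Ω → ℝ)) (μ : Ω → ℝ) (α : A → ℝ) (ν : Ω → ℝ) : Prop :=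
  ν ∈ P ∧ (∀ β ∈ stdSimplex ℝ A, pay u β ν ≤ pay u α ν) ∧ pay u α ν ≤ pay u α μ

/-- The payoff-irrelevance assumption: every state has a distinct payoff-equivalent
partner, and reallocating mass between the two preserves membership in `P`. -/
def Irrelevance {A Ω : Type*} [Fintype A] [Fintype Ω]
    (u : A → Ω → ℝ) (P : Set (Ω → ℝ)) : Prop :=
  ∀ ω : Ω, ∃ ω' : Ω, ω' ≠ ω ∧ (∀ a, u a ω = u a ω') ∧
    ∀ ν ν' : Ω → ℝ, ν ∈ stdSimplex ℝ Ω → ν' ∈ stdSimplex ℝ Ω →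
      (∀ s, s ≠ ω → s ≠ ω' → ν s = ν' s) → (ν ∈ P ↔ ν' ∈ P)

namespace Stmt6Aux
variable {A Ω : Type*} [Fintype A] [Fintype Ω]

lemma simplex_le_one {ρ : Ω → ℝ} (h : ρ ∈ stdSimplex ℝ Ω) (ω : Ω) : ρ ω ≤ 1 := by
  have := Finset.single_le_sum (f := ρ) (fun i _ => h.1 i) (Finset.mem_univ ω)
  rwa [h.2] at this

lemma pay_bound (u : A → Ω → ℝ) {β : A → ℝ} {ρ : Ω → ℝ}
    (hβ : β ∈ stdSimplex ℝ A) (hρ : ρ ∈ stdSimplex ℝ Ω) :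
    -(∑ a, ∑ ω, |u a ω|) ≤ pay u β ρ := by
  rw [pay, ← Finset.sum_neg_distrib]
  refine Finset.sum_le_sum fun a _ => ?_
  rw [← Finset.sum_neg_distrib]
  refine Finset.sum_le_sum fun ω _ => ?_
  have hb0 := hβ.1 a; have hb1 := simplex_le_one hβ a
  have hr0 := hρ.1 ω; have hr1 := simplex_le_one hρ ω
  rcases le_or_gt 0 (u a ω) with h | h
  · have : 0 ≤ β a * (u a ω * ρ ω) := by positivity
    linarith [abs_nonneg (u a ω)]
  · have h1 : u a ω ≤ u a ω * ρ ω := by nlinarith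
    have huρ : u a ω * ρ ω ≤ 0 := mul_nonpos_of_nonpos_of_nonneg h.le hr0
    have h2 : u a ω * ρ ω ≤ β a * (u a ω * ρ ω) := by
      nlinarith [mul_nonneg (sub_nonneg.2 hb1) (neg_nonneg.2 huρ)]
    have h3 : -|u a ω| = u a ω := by rw [abs_of_neg h]; ring
    linarith

lemma pay_row (u : A → Ω → ℝ) (α : A → ℝ) (ρ : Ω → ℝ) :
    pay u α ρ = ∑ ω, (∑ a, α a * u a ω) * ρ ω := by
  rw [pay, Finset.sum_comm]
  refine Finset.sum_congr rfl fun ω _ => ?_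
  rw [Finset.sum_mul]
  exact Finset.sum_congr rfl fun a _ => by ring

lemma pay_col (u : A → Ω → ℝ) (β : A → ℝ) (ρ : Ω → ℝ) :
    pay u β ρ = ∑ a, β a * ∑ ω, u a ω * ρ ω := by
  rw [pay]
  exact Finset.sum_congr rfl fun a _ => by rw [Finset.mul_sum]

def gmap (u : A → Ω → ℝ) : (Ω → ℝ) →ₗ[ℝ] (A → ℝ) where
  toFun ρ := fun a => ∑ ω, u a ω * ρ ω
  map_add' ρ σ := by funext a; simp [Pi.add_apply, mul_add, Finset.sum_add_distrib]
  map_smul' c ρ := by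
    funext a
    simp only [Pi.smul_apply, smul_eq_mul, RingHom.id_apply]
    rw [Finset.mul_sum]
    exact Finset.sum_congr rfl fun ω _ => by ring


section Constr
variable {Ω : Type*} [Fintype Ω] [DecidableEq Ω]

/-- Two-point functional `p_s(v) = d ω₀ · v s − d s · v ω₀`, vanishing on `d`. -/
def pf (d : Ω → ℝ) (ω₀ : Ω) (s ω : Ω) : ℝ :=
  (if ω = s then d ω₀ else 0) - (if ω = ω₀ then d s else 0)

lemma pf_sum (d : Ω → ℝ) (ω₀ s : Ω) (v : Ω → ℝ) :
    ∑ ω, pf d ω₀ s ω * v ω = d ω₀ * v s - d s * v ω₀ := by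
  simp [pf, sub_mul, Finset.sum_sub_distrib, ite_mul, Finset.sum_ite_eq']

def qf (d : Ω → ℝ) (ω₀ : Ω) (e : Fin (Fintype.card Ω) ≃ Ω)
    (j : Fin (Fintype.card Ω + 1)) (ω : Ω) : ℝ :=
  if h : (j : ℕ) < Fintype.card Ω then pf d ω₀ (e ⟨j, h⟩) ω else -∑ s, pf d ω₀ s ω

lemma qf_sum_zero (d : Ω → ℝ) (ω₀ : Ω) (e : Fin (Fintype.card Ω) ≃ Ω) (ω : Ω) :
    ∑ j, qf d ω₀ e j ω = 0 := by
  rw [Fin.sum_univ_castSucc]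
  have h1 : ∀ j : Fin (Fintype.card Ω), qf d ω₀ e j.castSucc ω = pf d ω₀ (e j) ω := by
    intro j
    rw [qf, dif_pos (by simpa using j.isLt)]
    congr
  have h2 : qf d ω₀ e (Fin.last _) ω = -∑ s, pf d ω₀ s ω := by
    rw [qf, dif_neg (by simp)]
  rw [h2, Finset.sum_congr rfl fun j _ => h1 j, Equiv.sum_comp e (fun s => pf d ω₀ s ω)]
  ring

lemma qf_sum (d : Ω → ℝ) (ω₀ : Ω) (e : Fin (Fintype.card Ω) ≃ Ω)
    (σ : Fin (Fintype.card Ω + 1)) (v : Ω → ℝ) :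
    ∑ ω, qf d ω₀ e σ ω * v ω =
      if h : (σ : ℕ) < Fintype.card Ω then d ω₀ * v (e ⟨σ, h⟩) - d (e ⟨σ, h⟩) * v ω₀
      else -∑ s, (d ω₀ * v s - d s * v ω₀) := by
  by_cases h : (σ : ℕ) < Fintype.card Ω
  · rw [dif_pos h]
    have : ∀ ω, qf d ω₀ e σ ω = pf d ω₀ (e ⟨σ, h⟩) ω := fun ω => by rw [qf, dif_pos h]
    rw [Finset.sum_congr rfl fun ω _ => by rw [this ω]]
    exact pf_sum d ω₀ _ v
  · rw [dif_neg h]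
    calc ∑ ω, qf d ω₀ e σ ω * v ω
        = ∑ ω, -∑ s, pf d ω₀ s ω * v ω := by
          refine Finset.sum_congr rfl fun ω _ => ?_
          rw [qf, dif_neg h, neg_mul, Finset.sum_mul]
      _ = -∑ s, ∑ ω, pf d ω₀ s ω * v ω := by
          rw [Finset.sum_neg_distrib, Finset.sum_comm]
      _ = -∑ s, (d ω₀ * v s - d s * v ω₀) := by
          rw [Finset.sum_congr rfl fun s _ => pf_sum d ω₀ s v]

lemma qf_dzero (d : Ω → ℝ) (ω₀ : Ω) (e : Fin (Fintype.card Ω) ≃ Ω)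
    (σ : Fin (Fintype.card Ω + 1)) :
    ∑ ω, qf d ω₀ e σ ω * d ω = 0 := by
  rw [qf_sum]
  split
  · ring
  · rw [Finset.sum_eq_zero fun s _ => by ring]
    ring

lemma qf_single (d : Ω → ℝ) (ω₀ : Ω) (e : Fin (Fintype.card Ω) ≃ Ω) (s : Ω) (v : Ω → ℝ) :
    ∑ ω, qf d ω₀ e ((e.symm s).castSucc) ω * v ω = d ω₀ * v s - d s * v ω₀ := by
  rw [qf_sum]
  have h : ((e.symm s).castSucc : ℕ) < Fintype.card Ω := by simpa using (e.symm s).isLt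
  rw [dif_pos h]
  have he : e ⟨((e.symm s).castSucc : ℕ), h⟩ = s := by
    have : (⟨((e.symm s).castSucc : ℕ), h⟩ : Fin (Fintype.card Ω)) = e.symm s :=
      Fin.ext (by simp)
    rw [this, e.apply_symm_apply]
  rw [he]

/-- Normalizing constant. -/
def Cc (d : Ω → ℝ) (ω₀ : Ω) (e : Fin (Fintype.card Ω) ≃ Ω) : ℝ :=
  ∑ j, ∑ ω, |qf d ω₀ e j ω|

lemma Cc_nonneg (d : Ω → ℝ) (ω₀ : Ω) (e : Fin (Fintype.card Ω) ≃ Ω) : 0 ≤ Cc d ω₀ e :=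
  Finset.sum_nonneg fun j _ => Finset.sum_nonneg fun ω _ => abs_nonneg _

lemma Cc_ge (d : Ω → ℝ) (ω₀ : Ω) (e : Fin (Fintype.card Ω) ≃ Ω)
    (j : Fin (Fintype.card Ω + 1)) (ω : Ω) : |qf d ω₀ e j ω| ≤ Cc d ω₀ e := by
  calc |qf d ω₀ e j ω| ≤ ∑ ω', |qf d ω₀ e j ω'| :=
        Finset.single_le_sum (f := fun ω' => |qf d ω₀ e j ω'|) (fun i _ => abs_nonneg _) (Finset.mem_univ ω)
    _ ≤ Cc d ω₀ e :=
        Finset.single_le_sum (f := fun j' => ∑ ω', |qf d ω₀ e j' ω'|)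
          (fun i _ => Finset.sum_nonneg fun ω' _ => abs_nonneg _) (Finset.mem_univ j)

noncomputable def epsc (d : Ω → ℝ) (ω₀ : Ω) (e : Fin (Fintype.card Ω) ≃ Ω) : ℝ :=
  1 / (((Fintype.card Ω : ℝ) + 1) * (Cc d ω₀ e + 1))

lemma epsc_pos (d : Ω → ℝ) (ω₀ : Ω) (e : Fin (Fintype.card Ω) ≃ Ω) : 0 < epsc d ω₀ e := by
  have := Cc_nonneg d ω₀ e
  rw [epsc]
  positivity

/-- The experiment. -/
noncomputable def Ec (d : Ω → ℝ) (ω₀ : Ω) (e : Fin (Fintype.card Ω) ≃ Ω)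
    (ω : Ω) (j : Fin (Fintype.card Ω + 1)) : ℝ :=
  1 / ((Fintype.card Ω : ℝ) + 1) + epsc d ω₀ e * qf d ω₀ e j ω

lemma Ec_stoch (d : Ω → ℝ) (ω₀ : Ω) (e : Fin (Fintype.card Ω) ≃ Ω) :
    IsStochastic (Ec d ω₀ e) := by
  have hk : (0:ℝ) < (Fintype.card Ω : ℝ) + 1 := by positivity
  have hC := Cc_nonneg d ω₀ e
  have hε := epsc_pos d ω₀ e
  constructor
  · intro ω j
    have h1 : epsc d ω₀ e * Cc d ω₀ e ≤ 1 / ((Fintype.card Ω : ℝ) + 1) := by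
      rw [epsc, div_mul_eq_mul_div, one_mul, div_le_div_iff₀ (by positivity) hk]
      nlinarith
    have h2 : |qf d ω₀ e j ω| ≤ Cc d ω₀ e := Cc_ge d ω₀ e j ω
    have h3 : epsc d ω₀ e * |qf d ω₀ e j ω| ≤ epsc d ω₀ e * Cc d ω₀ e :=
      mul_le_mul_of_nonneg_left h2 hε.le
    have h4 : -(epsc d ω₀ e * qf d ω₀ e j ω) ≤ epsc d ω₀ e * |qf d ω₀ e j ω| := by
      rw [← mul_neg]
      exact mul_le_mul_of_nonneg_left (neg_le_abs _) hε.le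
    rw [Ec]
    linarith
  · intro ω
    simp only [Ec]
    rw [Finset.sum_add_distrib, ← Finset.mul_sum, qf_sum_zero, mul_zero, add_zero,
      Finset.sum_const, Finset.card_univ, Fintype.card_fin, nsmul_eq_mul]
    push_cast
    field_simp

lemma Ec_sum (d : Ω → ℝ) (ω₀ : Ω) (e : Fin (Fintype.card Ω) ≃ Ω)
    (σ : Fin (Fintype.card Ω + 1)) (ρ : Ω → ℝ) (hρ : ∑ ω, ρ ω = 1) :
    ∑ ω, Ec d ω₀ e ω σ * ρ ω =
      1 / ((Fintype.card Ω : ℝ) + 1) + epsc d ω₀ e * ∑ ω, qf d ω₀ e σ ω * ρ ω := by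
  have : ∀ ω, Ec d ω₀ e ω σ * ρ ω =
      (1 / ((Fintype.card Ω : ℝ) + 1)) * ρ ω + epsc d ω₀ e * (qf d ω₀ e σ ω * ρ ω) := by
    intro ω; rw [Ec]; ring
  rw [Finset.sum_congr rfl fun ω _ => this ω, Finset.sum_add_distrib, ← Finset.mul_sum,
    ← Finset.mul_sum, hρ, mul_one]


end Constr

lemma backward {A Ω : Type*} [Fintype A] [Fintype Ω]
    (u : A → Ω → ℝ) (P : Set (Ω → ℝ)) (μ : Ω → ℝ)
    (hPs : P ⊆ stdSimplex ℝ Ω) (hμ : μ ∈ P) (hirr : Irrelevance u P)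
    (α : A → ℝ) (hα : α ∈ stdSimplex ℝ A)
    (ν : Ω → ℝ) (hsup : Supports u P μ α ν) : Implementable u P μ α := by
  classical
  obtain ⟨hνP, hopt, hle⟩ := hsup
  have hμΔ := hPs hμ
  have hνΔ := hPs hνP
  obtain ⟨ω₀, hω₀⟩ : ∃ ω, 0 < μ ω := by
    by_contra hc
    push_neg at hc
    have h0 : ∑ ω, μ ω = 0 := Finset.sum_eq_zero fun ω _ => le_antisymm (hc ω) (hμΔ.1 ω)
    rw [hμΔ.2] at h0
    norm_num at h0
  obtain ⟨ω₁, hne, hu01, hex⟩ := hirr ω₀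
  set ν' : Ω → ℝ := fun s => if s = ω₀ then 0 else if s = ω₁ then ν ω₁ + ν ω₀ else ν s
    with hν'def
  have hδ : ∀ s, ν' s = ν s + (if s = ω₀ then -(ν ω₀) else 0) + (if s = ω₁ then ν ω₀ else 0) := by
    intro s
    by_cases h0 : s = ω₀
    · have h1 : s ≠ ω₁ := fun h => hne (h ▸ h0 ▸ rfl)
      simp [hν'def, h0, h1, if_neg (fun h : ω₀ = ω₁ => hne h.symm)]
    · by_cases h1 : s = ω₁ <;> simp [hν'def, h0, h1, hne]
  have hsum' : ∑ s, ν' s = 1 := by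
    rw [Finset.sum_congr rfl fun s _ => hδ s]
    simp [Finset.sum_add_distrib, hνΔ.2]
  have hν'Δ : ν' ∈ stdSimplex ℝ Ω := by
    refine ⟨fun s => ?_, hsum'⟩
    rw [hν'def]
    dsimp only
    split
    · exact le_refl 0
    · split
      · exact add_nonneg (hνΔ.1 ω₁) (hνΔ.1 ω₀)
      · exact hνΔ.1 s
  have hν'P : ν' ∈ P :=
    (hex ν ν' hνΔ hν'Δ (fun s h0 h1 => by simp [hν'def, h0, h1])).mp hνP
  have hpay' : ∀ β : A → ℝ, pay u β ν' = pay u β ν := by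
    intro β
    rw [pay, pay]
    refine Finset.sum_congr rfl fun a _ => ?_
    have key : ∑ ω, u a ω * ν' ω = ∑ ω, u a ω * ν ω := by
      have hterm : ∀ s, u a s * ν' s =
          u a s * ν s + (if s = ω₀ then -(u a ω₀ * ν ω₀) else 0)
            + (if s = ω₁ then u a ω₁ * ν ω₀ else 0) := by
        intro s
        rw [hδ s, mul_add, mul_add]
        by_cases h0 : s = ω₀
        · have h1 : s ≠ ω₁ := fun h => hne (h ▸ h0 ▸ rfl)
          subst h0
          simp [h1]
        · by_cases h1 : s = ω₁
          · subst h1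
            simp [h0, hne]
          · simp [h0, h1]
      rw [Finset.sum_congr rfl fun s _ => hterm s]
      simp [Finset.sum_add_distrib, hu01 a]
    calc ∑ ω, β a * (u a ω * ν' ω) = β a * ∑ ω, u a ω * ν' ω := by rw [Finset.mul_sum]
      _ = β a * ∑ ω, u a ω * ν ω := by rw [key]
      _ = ∑ ω, β a * (u a ω * ν ω) := by rw [Finset.mul_sum]
  set d : Ω → ℝ := fun s => ν' s - μ s with hd
  have hdω₀ : d ω₀ = -(μ ω₀) := by simp [hd, hν'def]
  have hdne : d ω₀ ≠ 0 := by
    rw [hdω₀]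
    exact neg_ne_zero.2 (ne_of_gt hω₀)
  set e : Fin (Fintype.card Ω) ≃ Ω := (Fintype.equivFin Ω).symm with he
  have hεpos := epsc_pos d ω₀ e
  refine ⟨Fintype.card Ω + 1, Ec d ω₀ e, Ec_stoch d ω₀ e, hα, ?_⟩
  set I := identified P μ (Ec d ω₀ e) with hI
  -- ν' is in the identified set
  have hqd : ∀ σ (ρ₁ ρ₂ : Ω → ℝ), (∀ s, ρ₁ s - ρ₂ s = d s) →
      ∑ ω, qf d ω₀ e σ ω * ρ₁ ω = ∑ ω, qf d ω₀ e σ ω * ρ₂ ω := by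
    intro σ ρ₁ ρ₂ hdd
    have h0 := qf_dzero d ω₀ e σ
    have : ∑ ω, qf d ω₀ e σ ω * ρ₁ ω - ∑ ω, qf d ω₀ e σ ω * ρ₂ ω
        = ∑ ω, qf d ω₀ e σ ω * d ω := by
      rw [← Finset.sum_sub_distrib]
      exact Finset.sum_congr rfl fun ω _ => by rw [← mul_sub, hdd ω]
    rw [h0] at this
    linarith
  have hν'I : ν' ∈ I := by
    refine ⟨hν'P, fun σ => ?_⟩
    rw [Ec_sum d ω₀ e σ ν' hsum', Ec_sum d ω₀ e σ μ hμΔ.2,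
      hqd σ ν' μ (fun s => by rw [hd])]
  -- constraint characterization
  have hchar : ∀ ρ, ρ ∈ I → ∀ s, d ω₀ * (ρ s - μ s) = d s * (ρ ω₀ - μ ω₀) := by
    rintro ρ ⟨hρP, hρE⟩ s
    have hρΔ := hPs hρP
    have h1 := hρE ((e.symm s).castSucc)
    rw [Ec_sum d ω₀ e _ ρ hρΔ.2, Ec_sum d ω₀ e _ μ hμΔ.2] at h1
    have h2 : ∑ ω, qf d ω₀ e ((e.symm s).castSucc) ω * ρ ω
        = ∑ ω, qf d ω₀ e ((e.symm s).castSucc) ω * μ ω :=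
      mul_left_cancel₀ (ne_of_gt hεpos) (by linarith)
    rw [qf_single d ω₀ e s ρ, qf_single d ω₀ e s μ] at h2
    ring_nf
    ring_nf at h2
    linarith
  -- α's payoff is minimized on I at ν'
  have hpayα : ∀ ρ, ρ ∈ I → pay u α ν' ≤ pay u α ρ := by
    intro ρ hρ
    have hρΔ := hPs hρ.1
    set t := (ρ ω₀ - μ ω₀) / d ω₀ with ht
    have hts : ∀ s, ρ s - μ s = t * d s := by
      intro s
      have hc := hchar ρ hρ s
      rw [ht, div_mul_eq_mul_div, eq_div_iff hdne]
      linarith [hc]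
    have ht1 : t ≤ 1 := by
      have h := hts ω₀
      rw [hdω₀] at h
      have h0 : 0 ≤ ρ ω₀ := hρΔ.1 ω₀
      nlinarith
    have hcd : ∑ s, (∑ a, α a * u a s) * d s ≤ 0 := by
      have hν'μ : pay u α ν' - pay u α μ ≤ 0 := by
        rw [hpay' α]
        linarith
      rw [pay_row, pay_row] at hν'μ
      have : ∑ s, (∑ a, α a * u a s) * ν' s - ∑ s, (∑ a, α a * u a s) * μ s
          = ∑ s, (∑ a, α a * u a s) * d s := by
        rw [← Finset.sum_sub_distrib]
        exact Finset.sum_congr rfl fun s _ => by rw [← mul_sub, hd]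
      linarith
    rw [pay_row, pay_row]
    have h1 : ∑ s, (∑ a, α a * u a s) * ρ s - ∑ s, (∑ a, α a * u a s) * μ s
        = t * ∑ s, (∑ a, α a * u a s) * d s := by
      rw [← Finset.sum_sub_distrib, Finset.mul_sum]
      exact Finset.sum_congr rfl fun s _ => by rw [← mul_sub, hts s]; ring
    have h2 : ∑ s, (∑ a, α a * u a s) * ν' s - ∑ s, (∑ a, α a * u a s) * μ s
        = ∑ s, (∑ a, α a * u a s) * d s := by
      rw [← Finset.sum_sub_distrib]
      exact Finset.sum_congr rfl fun s _ => by rw [← mul_sub, hd]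
    nlinarith [mul_nonneg (sub_nonneg.2 ht1) (neg_nonneg.2 hcd)]
  -- conclude
  intro β hβ
  have hLB : ∀ γ : A → ℝ, γ ∈ stdSimplex ℝ A →
      ∀ x ∈ pay u γ '' I, -(∑ a, ∑ ω, |u a ω|) ≤ x := by
    rintro γ hγ x ⟨ρ, hρ, rfl⟩
    exact pay_bound u hγ (hPs hρ.1)
  have hbddβ : BddBelow (pay u β '' I) := ⟨_, fun x hx => hLB β hβ x hx⟩
  have hbddα : BddBelow (pay u α '' I) := ⟨_, fun x hx => hLB α hα x hx⟩
  have hInfα : pay u α ν' ≤ sInf (pay u α '' I) := by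
    refine le_csInf ⟨_, ⟨ν', hν'I, rfl⟩⟩ ?_
    rintro x ⟨ρ, hρ, rfl⟩
    exact hpayα ρ hρ
  calc sInf (pay u β '' I) ≤ pay u β ν' := csInf_le hbddβ ⟨ν', hν'I, rfl⟩
    _ = pay u β ν := hpay' β
    _ ≤ pay u α ν := hopt β hβ
    _ = pay u α ν' := (hpay' α).symm
    _ ≤ sInf (pay u α '' I) := hInfα

lemma forward {A Ω : Type*} [Fintype A] [Fintype Ω]
    (u : A → Ω → ℝ) (P : Set (Ω → ℝ)) (μ : Ω → ℝ)
    (hPc : IsCompact P) (hPconv : Convex ℝ P) (hPs : P ⊆ stdSimplex ℝ Ω) (hμ : μ ∈ P)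
    (α : A → ℝ) (hα : α ∈ stdSimplex ℝ A)
    (himp : Implementable u P μ α) : ∃ ν, Supports u P μ α ν := by
  classical
  obtain ⟨n, E, hE, hαm, himpl⟩ := himp
  set I := identified P μ E with hIdef
  have hμI : μ ∈ I := ⟨hμ, fun σ => rfl⟩
  set v := sInf (pay u α '' I) with hv
  have hLB : ∀ γ : A → ℝ, γ ∈ stdSimplex ℝ A →
      ∀ x ∈ pay u γ '' I, -(∑ a, ∑ ω, |u a ω|) ≤ x := by
    rintro γ hγ x ⟨ρ, hρ, rfl⟩
    exact pay_bound u hγ (hPs hρ.1)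
  have hbddα : BddBelow (pay u α '' I) := ⟨_, fun x hx => hLB α hα x hx⟩
  have hIc : IsCompact I := by
    refine IsCompact.of_isClosed_subset hPc ?_ (fun ρ hρ => hρ.1)
    have hIeq : I = P ∩ ⋂ σ, {ρ : Ω → ℝ | ∑ ω, E ω σ * ρ ω = ∑ ω, E ω σ * μ ω} := by
      ext ρ
      simp [hIdef, identified, Set.mem_iInter]
    rw [hIeq]
    refine hPc.isClosed.inter (isClosed_iInter fun σ => isClosed_eq ?_ continuous_const)
    exact continuous_finset_sum _ fun ω _ => continuous_const.mul (continuous_apply ω)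
  have hIconv : Convex ℝ I := by
    intro x hx y hy a b ha hb hab
    refine ⟨hPconv hx.1 hy.1 ha hb hab, fun σ => ?_⟩
    have hlin : ∀ ρ1 ρ2 : Ω → ℝ, ∑ ω, E ω σ * (a • ρ1 + b • ρ2) ω
        = a * ∑ ω, E ω σ * ρ1 ω + b * ∑ ω, E ω σ * ρ2 ω := by
      intro ρ1 ρ2
      calc ∑ ω, E ω σ * (a • ρ1 + b • ρ2) ω
          = ∑ ω, (a * (E ω σ * ρ1 ω) + b * (E ω σ * ρ2 ω)) := by
            refine Finset.sum_congr rfl fun ω _ => ?_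
            simp only [Pi.add_apply, Pi.smul_apply, smul_eq_mul]
            ring
        _ = a * ∑ ω, E ω σ * ρ1 ω + b * ∑ ω, E ω σ * ρ2 ω := by
            rw [Finset.sum_add_distrib, ← Finset.mul_sum, ← Finset.mul_sum]
    rw [hlin x y, hx.2 σ, hy.2 σ, ← add_mul, hab, one_mul]
  -- Key step: some prior in I makes every pure action worth at most v.
  have hkey : ∃ ρ ∈ I, ∀ a, (∑ ω, u a ω * ρ ω) ≤ v := by
    by_contra hcon
    push_neg at hcon
    set g := gmap u with hg
    set J := g '' I with hJ
    set K := {y : A → ℝ | ∀ a, y a ≤ v} with hK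
    have hJc : IsCompact J := hIc.image g.continuous_of_finiteDimensional
    have hJconv : Convex ℝ J := hIconv.linear_image g
    have hKcl : IsClosed K := by
      have hKeq : K = ⋂ a, {y : A → ℝ | y a ≤ v} := by
        ext y
        simp [hK, Set.mem_iInter]
      rw [hKeq]
      exact isClosed_iInter fun a => isClosed_le (continuous_apply a) continuous_const
    have hKconv : Convex ℝ K := by
      intro x hx y hy a b ha hb hab i
      have h1 := hx i
      have h2 := hy i
      simp only [Pi.add_apply, Pi.smul_apply, smul_eq_mul]
      have h3 : a * v + b * v = v := by rw [← add_mul, hab, one_mul]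
      linarith [mul_le_mul_of_nonneg_left h1 ha, mul_le_mul_of_nonneg_left h2 hb]
    have hdisj : Disjoint J K := by
      rw [Set.disjoint_left]
      rintro y ⟨ρ, hρ, rfl⟩ hyK
      obtain ⟨a, ha⟩ := hcon ρ hρ
      have : g ρ a ≤ v := hyK a
      have hga : g ρ a = ∑ ω, u a ω * ρ ω := rfl
      rw [hga] at this
      linarith
    obtain ⟨f, u', v', hfJ, huv, hfK⟩ :=
      geometric_hahn_banach_compact_closed hJconv hJc hKconv hKcl hdisj
    have hvK : (fun _ => v : A → ℝ) ∈ K := fun a => le_refl v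
    have hfv : v' < f (fun _ => v) := hfK _ hvK
    have hfa : ∀ a : A, f (Pi.single a 1) ≤ 0 := by
      intro a
      set psa : A → ℝ := Pi.single a 1 with hpsa
      by_contra hfa'
      push_neg at hfa'
      set t := (f (fun _ => v) - v') / f psa + 1 with htdef
      have htpos : 0 < t := by
        have := div_pos (sub_pos.2 hfv) hfa'
        rw [htdef]
        linarith
      have hmem : ((fun _ => v) - t • psa) ∈ K := by
        intro b
        simp only [Pi.sub_apply, Pi.smul_apply, smul_eq_mul]
        by_cases hb : b = a
        · subst hb
          rw [hpsa, Pi.single_eq_same]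
          nlinarith
        · rw [hpsa, Pi.single_eq_of_ne hb, mul_zero]
          linarith
      have h5 := hfK _ hmem
      rw [map_sub, map_smul, smul_eq_mul] at h5
      have h6 : t * f psa = (f (fun _ => v) - v') + f psa := by
        rw [htdef]
        field_simp
      nlinarith
    have hexp : ∀ y : A → ℝ, f y = ∑ a, y a * f (Pi.single a 1) := by
      intro y
      have hy : y = ∑ a, y a • (Pi.single a 1 : A → ℝ) := by
        funext b
        rw [Finset.sum_apply]
        simp [Pi.single_apply, mul_ite, Finset.sum_ite_eq]
      conv_lhs => rw [hy]
      rw [map_sum]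
      exact Finset.sum_congr rfl fun a _ => by rw [map_smul, smul_eq_mul]
    set β₀ : A → ℝ := fun a => -(f (Pi.single a 1)) with hβ₀def
    have hβ₀ : ∀ a, 0 ≤ β₀ a := fun a => neg_nonneg.2 (hfa a)
    set S := ∑ a, β₀ a with hS
    have hS0 : 0 ≤ S := Finset.sum_nonneg fun a _ => hβ₀ a
    have hfy : ∀ y : A → ℝ, f y = -∑ a, y a * β₀ a := by
      intro y
      rw [hexp y]
      rw [← Finset.sum_neg_distrib]
      exact Finset.sum_congr rfl fun a _ => by rw [hβ₀def]; ring
    have hSpos : 0 < S := by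
      rcases hS0.lt_or_eq with h | h
      · exact h
      · exfalso
        have hz : ∀ a ∈ Finset.univ, β₀ a = 0 :=
          (Finset.sum_eq_zero_iff_of_nonneg fun a _ => hβ₀ a).1 h.symm
        have hf0 : ∀ y : A → ℝ, f y = 0 := by
          intro y
          rw [hfy y, Finset.sum_eq_zero fun a ha => by rw [hz a ha, mul_zero], neg_zero]
        have h1 : f (g μ) < u' := hfJ _ ⟨μ, hμI, rfl⟩
        rw [hf0] at h1
        rw [hf0] at hfv
        linarith
    set β : A → ℝ := fun a => β₀ a / S with hβdef
    have hβΔ : β ∈ stdSimplex ℝ A := by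
      refine ⟨fun a => div_nonneg (hβ₀ a) hS0, ?_⟩
      rw [hβdef]
      rw [← Finset.sum_div]
      field_simp
      exact hS.symm
    have hfin : v < sInf (pay u β '' I) := by
      have hlow : ∀ ρ ∈ I, -u' / S ≤ pay u β ρ := by
        intro ρ hρ
        have h1 : f (g ρ) < u' := hfJ _ ⟨ρ, hρ, rfl⟩
        rw [hfy] at h1
        have h4 : pay u β ρ = (∑ a, g ρ a * β₀ a) / S := by
          rw [pay_col, Finset.sum_div]
          refine Finset.sum_congr rfl fun a _ => ?_
          have hga : g ρ a = ∑ ω, u a ω * ρ ω := rfl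
          rw [← hga, hβdef]
          ring
        rw [h4, div_le_div_iff₀ hSpos hSpos]
        nlinarith
      have hgap : v < -u' / S := by
        rw [lt_div_iff₀ hSpos]
        have h2 : v' < f (fun _ => v) := hfv
        rw [hfy] at h2
        have h3 : ∑ a, v * β₀ a = v * S := by rw [← Finset.mul_sum]
        rw [h3] at h2
        linarith
      refine lt_of_lt_of_le hgap (le_csInf ⟨_, ⟨μ, hμI, rfl⟩⟩ ?_)
      rintro x ⟨ρ, hρ, rfl⟩
      exact hlow ρ hρ
    have hle2 := himpl β hβΔ
    linarith
  obtain ⟨ρh, hρI, hρa⟩ := hkey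
  have hvle : v ≤ pay u α ρh := csInf_le hbddα ⟨ρh, hρI, rfl⟩
  have hpayle : ∀ γ : A → ℝ, γ ∈ stdSimplex ℝ A → pay u γ ρh ≤ v := by
    intro γ hγ
    rw [pay_col]
    calc ∑ a, γ a * ∑ ω, u a ω * ρh ω ≤ ∑ a, γ a * v :=
          Finset.sum_le_sum fun a _ => mul_le_mul_of_nonneg_left (hρa a) (hγ.1 a)
      _ = v := by rw [← Finset.sum_mul, hγ.2, one_mul]
  refine ⟨ρh, hρI.1, fun γ hγ => (hpayle γ hγ).trans hvle, ?_⟩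
  exact (hpayle α hα).trans (csInf_le hbddα ⟨μ, hμI, rfl⟩)

end Stmt6Aux

/-- in the prior-free information design model with the payoff-irrelevance
assumption, an action is implementable iff it has a supporting prior. -/
theorem stmt6 {A Ω : Type*} [Fintype A] [Fintype Ω] [Nonempty A] [Nonempty Ω]
    (u : A → Ω → ℝ) (P : Set (Ω → ℝ)) (μ : Ω → ℝ)
    (hPne : P.Nonempty) (hPc : IsCompact P) (hPconv : Convex ℝ P)
    (hPs : P ⊆ stdSimplex ℝ Ω) (hμ : μ ∈ P)
    (hirr : Irrelevance u P)
    (α : A → ℝ) (hα : α ∈ stdSimplex ℝ A) :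
    Implementable u P μ α ↔ ∃ ν, Supports u P μ α ν :=
  ⟨Stmt6Aux.forward u P μ hPc hPconv hPs hμ α hα,
   fun ⟨ν, hν⟩ => Stmt6Aux.backward u P μ hPs hμ hirr α hα ν hν⟩
end

section
/- In the prior-free information design model satisfying the payoff-irrelevance assumption, if a prior ν supports action α, then there exists an almost fully informative information structure (Σ, E) with ker E = span{ν' − μ} for some prior ν' payoff-equivalent to ν, under which (α, ν') is a saddle point of the decision maker's maxmin problem, and hence (Σ, E) implements α. -/
open Finset

lemma mem_simplex_iff {ι : Type*} [Fintype ι] (f : ι → ℝ) :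
    f ∈ stdSimplex ℝ ι ↔ (∀ x, 0 ≤ f x) ∧ ∑ x, f x = 1 := Iff.rfl

lemma sum_move {Ω : Type*} [Fintype Ω] {ω₁ ω₂ : Ω} (hne : ω₁ ≠ ω₂)
    (g ρ ρ' : Ω → ℝ)
    (hoff : ∀ s, s ≠ ω₁ → s ≠ ω₂ → ρ' s = ρ s) (hg : g ω₁ = g ω₂)
    (hmass : ρ' ω₁ + ρ' ω₂ = ρ ω₁ + ρ ω₂) :
    ∑ ω, g ω * ρ' ω = ∑ ω, g ω * ρ ω := by
  classical
  have h0 : ∑ ω, g ω * ρ' ω - ∑ ω, g ω * ρ ω = ∑ ω, g ω * (ρ' ω - ρ ω) := by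
    rw [← Finset.sum_sub_distrib]
    exact Finset.sum_congr rfl fun ω _ => by ring
  have h1 : ∑ ω, g ω * (ρ' ω - ρ ω) = ∑ ω ∈ ({ω₁, ω₂} : Finset Ω), g ω * (ρ' ω - ρ ω) := by
    symm
    apply Finset.sum_subset (Finset.subset_univ _)
    intro s _ hs
    simp only [Finset.mem_insert, Finset.mem_singleton, not_or] at hs
    rw [hoff s hs.1 hs.2, sub_self, mul_zero]
  have h2 : ∑ ω ∈ ({ω₁, ω₂} : Finset Ω), g ω * (ρ' ω - ρ ω) = 0 := by
    rw [Finset.sum_pair hne, hg]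
    linear_combination g ω₂ * hmass
  linarith

lemma pay_aff {A Ω : Type*} [Fintype A] [Fintype Ω] (u : A → Ω → ℝ) (β : A → ℝ)
    (μ ν' ρ : Ω → ℝ) (c : ℝ) (h : ∀ ω, ρ ω = μ ω + c * (ν' ω - μ ω)) :
    pay u β ρ = pay u β μ + c * (pay u β ν' - pay u β μ) := by
  have inner : ∀ a, ∑ ω, β a * (u a ω * ρ ω)
      = ∑ ω, β a * (u a ω * μ ω)
        + c * (∑ ω, β a * (u a ω * ν' ω) - ∑ ω, β a * (u a ω * μ ω)) := by
    intro a
    calc ∑ ω, β a * (u a ω * ρ ω)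
        = ∑ ω, (β a * (u a ω * μ ω)
            + c * (β a * (u a ω * ν' ω) - β a * (u a ω * μ ω))) :=
          Finset.sum_congr rfl fun ω _ => by rw [h ω]; ring
      _ = ∑ ω, β a * (u a ω * μ ω)
            + ∑ ω, c * (β a * (u a ω * ν' ω) - β a * (u a ω * μ ω)) :=
          Finset.sum_add_distrib
      _ = ∑ ω, β a * (u a ω * μ ω)
            + c * ∑ ω, (β a * (u a ω * ν' ω) - β a * (u a ω * μ ω)) := by
          rw [Finset.mul_sum]
      _ = ∑ ω, β a * (u a ω * μ ω)
            + c * (∑ ω, β a * (u a ω * ν' ω) - ∑ ω, β a * (u a ω * μ ω)) := by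
          rw [← Finset.sum_sub_distrib]
  simp only [pay]
  calc ∑ a, ∑ ω, β a * (u a ω * ρ ω)
      = ∑ a, (∑ ω, β a * (u a ω * μ ω)
          + c * (∑ ω, β a * (u a ω * ν' ω) - ∑ ω, β a * (u a ω * μ ω))) :=
        Finset.sum_congr rfl fun a _ => inner a
    _ = ∑ a, ∑ ω, β a * (u a ω * μ ω)
          + ∑ a, c * (∑ ω, β a * (u a ω * ν' ω) - ∑ ω, β a * (u a ω * μ ω)) :=
        Finset.sum_add_distrib
    _ = ∑ a, ∑ ω, β a * (u a ω * μ ω)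
          + c * ∑ a, (∑ ω, β a * (u a ω * ν' ω) - ∑ ω, β a * (u a ω * μ ω)) := by
        rw [Finset.mul_sum]
    _ = ∑ a, ∑ ω, β a * (u a ω * μ ω)
          + c * (∑ a, ∑ ω, β a * (u a ω * ν' ω) - ∑ a, ∑ ω, β a * (u a ω * μ ω)) := by
        rw [← Finset.sum_sub_distrib]

lemma exists_experiment {Ω : Type*} [Fintype Ω] [Nonempty Ω] (d : Ω → ℝ)
    (hd : d ≠ 0) (hsum0 : ∑ ω, d ω = 0) :
    ∃ (n : ℕ) (E : Ω → Fin n → ℝ), IsStochastic E ∧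
      kerSet E = {x | ∃ c : ℝ, x = c • d} := by
  classical
  obtain ⟨ω₀, hω₀⟩ : ∃ ω, d ω ≠ 0 := by
    by_contra h; push_neg at h; exact hd (funext h)
  set n := Fintype.card Ω with hn
  have hn0 : 0 < n := Fintype.card_pos
  have hnR : (0:ℝ) < n := by exact_mod_cast hn0
  set S : ℝ := ∑ ω, d ω ^ 2 with hSdef
  have hS : 0 < S := Finset.sum_pos' (fun ω _ => sq_nonneg _)
    ⟨ω₀, Finset.mem_univ _, by positivity⟩
  set ε : ℝ := 1 / (n + 1) with hεdef
  have hε0 : 0 < ε := by positivity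
  have hεn : (1 - ε) / n = ε := by
    rw [hεdef]; field_simp; ring
  let e : Ω ≃ Fin n := Fintype.equivFin Ω
  set E : Ω → Fin n → ℝ :=
    fun ω σ => (1 - ε) / n + (if σ = e ω then ε else 0) - ε * d ω * d (e.symm σ) / S
    with hE
  have hdd : ∀ x y : Ω, d x * d y ≤ S := by
    intro x y
    have hx : d x ^ 2 ≤ S := Finset.single_le_sum (f := fun ω => d ω ^ 2)
      (fun i _ => sq_nonneg _) (Finset.mem_univ x)
    have hy : d y ^ 2 ≤ S := Finset.single_le_sum (f := fun ω => d ω ^ 2)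
      (fun i _ => sq_nonneg _) (Finset.mem_univ y)
    nlinarith [sq_nonneg (d x - d y)]
  have col : ∀ (v : Ω → ℝ) (σ : Fin n),
      ∑ ω, E ω σ * v ω
        = (1 - ε) / n * (∑ ω, v ω) + ε * v (e.symm σ)
          - ε * d (e.symm σ) / S * (∑ ω, d ω * v ω) := by
    intro v σ
    have step : ∀ ω : Ω, E ω σ * v ω
        = (1 - ε) / n * v ω + (if e.symm σ = ω then ε * v ω else 0)
          - ε * d (e.symm σ) / S * (d ω * v ω) := by
      intro ω
      by_cases h : σ = e ω
      · have h' : e.symm σ = ω := by rw [h, Equiv.symm_apply_apply]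
        simp only [hE, if_pos h, if_pos h']
        ring
      · have h' : e.symm σ ≠ ω := fun hh => h (by rw [← hh, Equiv.apply_symm_apply])
        simp only [hE, if_neg h, if_neg h']
        ring
    rw [Finset.sum_congr rfl fun ω _ => step ω, Finset.sum_sub_distrib,
      Finset.sum_add_distrib, Finset.sum_ite_eq, ← Finset.mul_sum, ← Finset.mul_sum]
    simp
  have hrow : ∀ ω, ∑ σ, E ω σ = 1 := by
    intro ω
    have step : ∀ σ : Fin n, E ω σ
        = (1 - ε) / n + (if σ = e ω then ε else 0) - ε * d ω / S * d (e.symm σ) := by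
      intro σ; simp only [hE]; ring
    rw [Finset.sum_congr rfl fun σ _ => step σ, Finset.sum_sub_distrib,
      Finset.sum_add_distrib, Finset.sum_const, Finset.sum_ite_eq', ← Finset.mul_sum]
    have h0 : ∑ σ : Fin n, d (e.symm σ) = 0 := by
      rw [Equiv.sum_comp e.symm d]; exact hsum0
    rw [h0, mul_zero, sub_zero]
    simp only [Finset.mem_univ, if_true, Finset.card_univ, Fintype.card_fin, nsmul_eq_mul]
    have hcan : (n:ℝ) * ((1 - ε) / ↑n) = 1 - ε := by field_simp
    rw [hcan]; ring
  have hpos : ∀ ω σ, 0 ≤ E ω σ := by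
    intro ω σ
    have h1 : ε * d ω * d (e.symm σ) / S ≤ ε := by
      rw [div_le_iff₀ hS]
      have := hdd ω (e.symm σ)
      nlinarith [hε0.le]
    have h2 : (0:ℝ) ≤ if σ = e ω then ε else 0 := by
      split_ifs; exacts [hε0.le, le_refl 0]
    simp only [hE]
    linarith [hεn]
  refine ⟨n, E, ⟨hpos, hrow⟩, ?_⟩
  ext v
  simp only [kerSet, Set.mem_setOf_eq]
  constructor
  · intro hv
    have key : ∀ ω' : Ω,
        (1 - ε) / n * (∑ ω, v ω) + ε * v ω' - ε * d ω' / S * (∑ ω, d ω * v ω) = 0 := by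
      intro ω'
      have h := hv (e ω')
      rwa [col v (e ω'), Equiv.symm_apply_apply] at h
    have e2 : ∑ ω' : Ω, ε * v ω' = ε * ∑ ω' : Ω, v ω' := by rw [Finset.mul_sum]
    have e3 : ∑ ω' : Ω, ε * d ω' / S * (∑ ω, d ω * v ω) = 0 := by
      rw [Finset.sum_congr rfl fun ω' (_ : ω' ∈ Finset.univ) =>
        (by ring : ε * d ω' / S * (∑ ω, d ω * v ω) = (ε / S * (∑ ω, d ω * v ω)) * d ω'),
        ← Finset.mul_sum, hsum0, mul_zero]
    have hT0 : ∑ ω, v ω = 0 := by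
      have hkey0 : (0:ℝ)
          = (∑ _ω' : Ω, (1 - ε) / ↑n * (∑ ω, v ω)) + (∑ ω' : Ω, ε * v ω')
            - ∑ ω' : Ω, ε * d ω' / S * (∑ ω, d ω * v ω) := by
        rw [← Finset.sum_add_distrib, ← Finset.sum_sub_distrib]
        exact (Finset.sum_eq_zero fun ω' _ => key ω').symm
      rw [e2, e3, sub_zero, Finset.sum_const, Finset.card_univ, nsmul_eq_mul, ← hn] at hkey0
      have hcan : (n:ℝ) * ((1 - ε) / ↑n * (∑ ω, v ω)) = (1 - ε) * (∑ ω, v ω) := by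
        field_simp
      rw [hcan] at hkey0
      linarith
    refine ⟨(∑ ω, d ω * v ω) / S, funext fun ω' => ?_⟩
    have h := key ω'
    rw [hT0] at h
    simp only [Pi.smul_apply, smul_eq_mul]
    exact mul_left_cancel₀ hε0.ne' (by linear_combination h)
  · rintro ⟨c, rfl⟩
    intro σ
    rw [col]
    have h1 : ∑ ω, (c • d) ω = 0 := by
      simp only [Pi.smul_apply, smul_eq_mul]
      rw [← Finset.mul_sum, hsum0, mul_zero]
    have h2 : ∑ ω, d ω * (c • d) ω = c * S := by
      simp only [Pi.smul_apply, smul_eq_mul, hSdef]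
      rw [Finset.mul_sum]
      exact Finset.sum_congr rfl fun ω _ => by ring
    rw [h1, h2]
    simp only [Pi.smul_apply, smul_eq_mul]
    field_simp
    try ring

/-- if `ν` supports `α` then there is a payoff-equivalent prior `ν'` and an
almost fully informative structure with `ker E = span{ν' − μ}` under which `(α, ν')` is
a saddle point of the maxmin problem, and which therefore implements `α`. -/
theorem stmt7 {A Ω : Type*} [Fintype A] [Fintype Ω] [Nonempty A] [Nonempty Ω]
    (u : A → Ω → ℝ) (P : Set (Ω → ℝ)) (μ : Ω → ℝ)
    (hPne : P.Nonempty) (hPc : IsCompact P) (hPconv : Convex ℝ P)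
    (hPs : P ⊆ stdSimplex ℝ Ω) (hμ : μ ∈ P)
    (hirr : Irrelevance u P)
    (α : A → ℝ) (hα : α ∈ stdSimplex ℝ A)
    (ν : Ω → ℝ) (hν : Supports u P μ α ν) :
    ∃ ν' ∈ P, (∀ β, pay u β ν' = pay u β ν) ∧
      ∃ (n : ℕ) (E : Ω → Fin n → ℝ), IsStochastic E ∧
        -- ker E = span{ν' − μ}, hence E is almost fully informative
        kerSet E = {x | ∃ c : ℝ, x = c • (ν' - μ)} ∧
        -- (α, ν') is a saddle point of the decision maker's problem under (Σ, E)
        (∀ β ∈ stdSimplex ℝ A, pay u β ν' ≤ pay u α ν') ∧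
        ν' ∈ identified P μ E ∧
        (∀ ρ ∈ identified P μ E, pay u α ν' ≤ pay u α ρ) ∧
        -- hence (Σ, E) implements α
        Implements u P μ E α := by
  classical
  obtain ⟨hνP, hνopt, hνμ⟩ := hν
  have hμs := hPs hμ
  have hνs := hPs hνP
  obtain ⟨s₀, hs₀⟩ : ∃ s, 0 < μ s := by
    by_contra h
    push_neg at h
    have hz : ∀ s, μ s = 0 := fun s => le_antisymm (h s) (hμs.1 s)
    have h1 := hμs.2
    rw [Finset.sum_congr rfl fun s _ => hz s] at h1
    simp at h1
  obtain ⟨s₁, hs₁ne, hu01, hPinv⟩ := hirr s₀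
  set ν' : Ω → ℝ := fun s => if s = s₀ then 0 else if s = s₁ then ν s₀ + ν s₁ else ν s
    with hν'def
  have hoff : ∀ s, s ≠ s₀ → s ≠ s₁ → ν' s = ν s := by
    intro s h1 h2; simp only [hν'def, if_neg h1, if_neg h2]
  have hν'0 : ν' s₀ = 0 := by simp only [hν'def, if_pos rfl]
  have hν'1 : ν' s₁ = ν s₀ + ν s₁ := by simp [hν'def, hs₁ne]
  have hmass : ν' s₀ + ν' s₁ = ν s₀ + ν s₁ := by rw [hν'0, hν'1]; ring
  have hsummove : ∀ g : Ω → ℝ, g s₀ = g s₁ → ∑ ω, g ω * ν' ω = ∑ ω, g ω * ν ω :=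
    fun g hg => sum_move (Ne.symm hs₁ne) g ν ν' hoff hg hmass
  have hν's : ν' ∈ stdSimplex ℝ Ω := by
    refine ⟨fun s => ?_, ?_⟩
    · simp only [hν'def]
      split_ifs
      · exact le_refl 0
      · exact add_nonneg (hνs.1 s₀) (hνs.1 s₁)
      · exact hνs.1 s
    · have h1 := hsummove (fun _ => 1) rfl
      simp only [one_mul] at h1
      rw [h1]; exact hνs.2
  have hν'P : ν' ∈ P := (hPinv ν ν' hνs hν's fun s h1 h2 => (hoff s h1 h2).symm).mp hνP
  have hpayeq : ∀ β : A → ℝ, pay u β ν' = pay u β ν := by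
    intro β
    simp only [pay]
    refine Finset.sum_congr rfl fun a _ => ?_
    have h1 : ∀ ρ : Ω → ℝ, ∑ ω, β a * (u a ω * ρ ω) = ∑ ω, (β a * u a ω) * ρ ω :=
      fun ρ => Finset.sum_congr rfl fun ω _ => by ring
    rw [h1, h1]
    exact hsummove (fun ω => β a * u a ω)
      (by show β a * u a s₀ = β a * u a s₁; rw [hu01 a])
  have hd0 : (ν' - μ) ≠ 0 := by
    intro h
    have h2 := congrFun h s₀
    simp only [Pi.sub_apply, Pi.zero_apply, hν'0] at h2
    linarith
  have hdsum : ∑ ω, (ν' - μ) ω = 0 := by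
    simp only [Pi.sub_apply]
    rw [Finset.sum_sub_distrib, hν's.2, hμs.2, sub_self]
  obtain ⟨n, E, hst, hker⟩ := exists_experiment (ν' - μ) hd0 hdsum
  have hsub : ∀ (σ : Fin n) (x : Ω → ℝ),
      ∑ ω, E ω σ * (x - μ) ω = ∑ ω, E ω σ * x ω - ∑ ω, E ω σ * μ ω := by
    intro σ x
    rw [← Finset.sum_sub_distrib]
    exact Finset.sum_congr rfl fun ω _ => by simp only [Pi.sub_apply]; ring
  have hid : ∀ ρ : Ω → ℝ, ρ ∈ identified P μ E ↔ ρ ∈ P ∧ ∃ c : ℝ, ρ - μ = c • (ν' - μ) := by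
    intro ρ
    simp only [identified, Set.mem_setOf_eq]
    constructor
    · rintro ⟨h1, h2⟩
      refine ⟨h1, ?_⟩
      have hk : (ρ - μ) ∈ kerSet E := by
        intro σ
        rw [hsub σ ρ, h2 σ, sub_self]
      rw [hker] at hk
      exact hk
    · rintro ⟨h1, c, hc⟩
      refine ⟨h1, fun σ => ?_⟩
      have hk : (ρ - μ) ∈ kerSet E := by rw [hker]; exact ⟨c, hc⟩
      have h3 := hk σ
      rw [hsub σ ρ] at h3
      linarith
  have hmin : ∀ ρ ∈ identified P μ E, pay u α ν' ≤ pay u α ρ := by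
    intro ρ hρ
    obtain ⟨hρP, c, hc⟩ := (hid ρ).mp hρ
    have hρs := hPs hρP
    have hpt : ∀ ω, ρ ω = μ ω + c * (ν' ω - μ ω) := by
      intro ω
      have h2 := congrFun hc ω
      simp only [Pi.sub_apply, Pi.smul_apply, smul_eq_mul] at h2
      linarith
    have hc1 : c ≤ 1 := by
      have h0 := hρs.1 s₀
      rw [hpt s₀, hν'0] at h0
      nlinarith
    have haff := pay_aff u α μ ν' ρ c hpt
    have hαν' : pay u α ν' ≤ pay u α μ := by rw [hpayeq α]; exact hνμ
    have hprod : 0 ≤ (1 - c) * (pay u α μ - pay u α ν') :=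
      mul_nonneg (by linarith) (by linarith)
    nlinarith [haff, hprod]
  have hsaddle1 : ∀ β ∈ stdSimplex ℝ A, pay u β ν' ≤ pay u α ν' := by
    intro β hβ
    rw [hpayeq β, hpayeq α]
    exact hνopt β hβ
  have hν'id : ν' ∈ identified P μ E := by
    refine (hid ν').mpr ⟨hν'P, 1, ?_⟩
    rw [one_smul]
  have hpayLB : ∀ β ∈ stdSimplex ℝ A, ∀ ρ ∈ stdSimplex ℝ Ω,
      -(∑ a, ∑ ω, |u a ω|) ≤ pay u β ρ := by
    intro β hβ ρ hρ
    have hterm : ∀ (a : A) (ω : Ω), -|u a ω| ≤ β a * (u a ω * ρ ω) := by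
      intro a ω
      have hβ0 := hβ.1 a
      have hρ0 := hρ.1 ω
      have hβ1 : β a ≤ 1 := by
        calc β a ≤ ∑ a', β a' := Finset.single_le_sum (fun i _ => hβ.1 i) (Finset.mem_univ a)
          _ = 1 := hβ.2
      have hρ1 : ρ ω ≤ 1 := by
        calc ρ ω ≤ ∑ ω', ρ ω' := Finset.single_le_sum (fun i _ => hρ.1 i) (Finset.mem_univ ω)
          _ = 1 := hρ.2
      have h1 : 0 ≤ β a * ρ ω := mul_nonneg hβ0 hρ0
      have h2 : β a * ρ ω ≤ 1 := by nlinarith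
      have h3 : (β a * ρ ω) * (-|u a ω|) ≤ (β a * ρ ω) * u a ω :=
        mul_le_mul_of_nonneg_left (neg_abs_le _) h1
      have h4 : 0 ≤ |u a ω| * (1 - β a * ρ ω) := mul_nonneg (abs_nonneg _) (by linarith)
      nlinarith [h3, h4]
    calc -(∑ a, ∑ ω, |u a ω|) = ∑ a, ∑ ω, -|u a ω| := by
          rw [← Finset.sum_neg_distrib]
          exact Finset.sum_congr rfl fun a _ => by rw [Finset.sum_neg_distrib]
      _ ≤ ∑ a, ∑ ω, β a * (u a ω * ρ ω) :=
          Finset.sum_le_sum fun a _ => Finset.sum_le_sum fun ω _ => hterm a ω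
      _ = pay u β ρ := rfl
  have himp : Implements u P μ E α := by
    refine ⟨hα, fun β hβ => ?_⟩
    have hbddβ : BddBelow (pay u β '' identified P μ E) := by
      refine ⟨-(∑ a, ∑ ω, |u a ω|), ?_⟩
      rintro y ⟨ρ, hρ, rfl⟩
      exact hpayLB β hβ ρ (hPs ((hid ρ).mp hρ).1)
    have h1 : sInf (pay u β '' identified P μ E) ≤ pay u β ν' :=
      csInf_le hbddβ ⟨ν', hν'id, rfl⟩
    have h2 : pay u α ν' ≤ sInf (pay u α '' identified P μ E) := by
      refine le_csInf ⟨pay u α ν', ⟨ν', hν'id, rfl⟩⟩ ?_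
      rintro y ⟨ρ, hρ, rfl⟩
      exact hmin ρ hρ
    have h3 : pay u β ν' ≤ pay u α ν' := hsaddle1 β hβ
    linarith
  exact ⟨ν', hν'P, hpayeq, n, E, hst, hker, hsaddle1, hν'id, hmin, himp⟩
end

section
/- In the prior-free information design model, suppose the true distribution μ itself supports action α (i.e., α is expected-utility optimal under μ). Then an information structure (Σ, E) is a maximal element (with respect to the robust informativeness order) of the set of structures implementing α if and only if (Σ, E) is fully informative, i.e., ker E = {0}. -/
open Finset

/-- `(Σ,E)` is a maximal element, w.r.t. the robust informativeness order
`(Σ',E') ⪰ (Σ,E) ↔ ker E' ⊆ ker E`, of the set of information structures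
implementing `α`. -/
def MaximalImplFor {A Ω S : Type*} [Fintype A] [Fintype Ω] [Fintype S]
    (u : A → Ω → ℝ) (P : Set (Ω → ℝ)) (μ : Ω → ℝ) (E : Ω → S → ℝ) (α : A → ℝ) : Prop :=
  IsStochastic E ∧ Implements u P μ E α ∧
    ∀ (n : ℕ) (E' : Ω → Fin n → ℝ), IsStochastic E' → Implements u P μ E' α →
      kerSet E' ⊆ kerSet E → kerSet E' = kerSet E

lemma zero_mem_kerSet {Ω S : Type*} [Fintype Ω] [Fintype S] (E : Ω → S → ℝ) :
    (0 : Ω → ℝ) ∈ kerSet E := by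
  intro σ; simp

lemma identified_singleton {Ω S : Type*} [Fintype Ω] [Fintype S]
    (P : Set (Ω → ℝ)) (μ : Ω → ℝ) (hμ : μ ∈ P) (E : Ω → S → ℝ)
    (hker : kerSet E = {0}) : identified P μ E = {μ} := by
  ext ν
  constructor
  · rintro ⟨hνP, hνE⟩
    have hmem : (ν - μ) ∈ kerSet E := by
      intro σ
      have := hνE σ
      simp only [Pi.sub_apply, mul_sub, Finset.sum_sub_distrib]
      linarith
    rw [hker] at hmem
    have : ν - μ = 0 := hmem
    simpa [sub_eq_zero] using this
  · rintro rfl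
    exact ⟨hμ, fun σ => rfl⟩

lemma implements_of_ker_trivial {A Ω S : Type*} [Fintype A] [Fintype Ω] [Fintype S]
    (u : A → Ω → ℝ) (P : Set (Ω → ℝ)) (μ : Ω → ℝ) (hμ : μ ∈ P)
    (α : A → ℝ) (hα : α ∈ stdSimplex ℝ A) (hsupp : Supports u P μ α μ)
    (E : Ω → S → ℝ) (hker : kerSet E = {0}) : Implements u P μ E α := by
  refine ⟨hα, fun β hβ => ?_⟩
  rw [identified_singleton P μ hμ E hker]
  simp only [Set.image_singleton, csInf_singleton]
  exact hsupp.2.1 β hβ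

/-- if the true distribution `μ` itself supports `α`, then an information
structure is maximally informative for implementing `α` iff it is fully informative,
i.e. has trivial kernel. -/
theorem stmt8 {A Ω S : Type*} [Fintype A] [Fintype Ω] [Fintype S] [Nonempty A] [Nonempty Ω]
    (u : A → Ω → ℝ) (P : Set (Ω → ℝ)) (μ : Ω → ℝ)
    (hPne : P.Nonempty) (hPc : IsCompact P) (hPconv : Convex ℝ P)
    (hPs : P ⊆ stdSimplex ℝ Ω) (hμ : μ ∈ P)
    (α : A → ℝ) (hα : α ∈ stdSimplex ℝ A) (hsupp : Supports u P μ α μ)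
    (E : Ω → S → ℝ) (hE : IsStochastic E) :
    MaximalImplFor u P μ E α ↔ kerSet E = {0} := by
  constructor
  · rintro ⟨-, -, hmax⟩
    -- use the fully informative experiment
    set n := Fintype.card Ω with hn
    let e : Ω ≃ Fin n := Fintype.equivFin Ω
    let E' : Ω → Fin n → ℝ := fun ω σ => if e ω = σ then 1 else 0
    have hE'stoch : IsStochastic E' := by
      constructor
      · intro ω σ; dsimp only [E']; split <;> norm_num
      · intro ω; simp [E']
    have hE'ker : kerSet E' = {0} := by
      ext v
      constructor
      · intro hv
        have : ∀ ω, v ω = 0 := by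
          intro ω
          have h1 := hv (e ω)
          simp only [E', ite_mul, one_mul, zero_mul] at h1
          rw [Finset.sum_eq_single_of_mem ω (Finset.mem_univ ω)
            (fun b _ hb => by simp [e.injective.ne hb])] at h1
          simpa using h1
        funext ω; exact this ω
      · rintro rfl; exact zero_mem_kerSet E'
    have himp : Implements u P μ E' α :=
      implements_of_ker_trivial u P μ hμ α hα hsupp E' hE'ker
    have hsub : kerSet E' ⊆ kerSet E := by
      rw [hE'ker]
      rintro v rfl
      exact zero_mem_kerSet E
    have := hmax n E' hE'stoch himp hsub
    rw [← this, hE'ker]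
  · intro hker
    refine ⟨hE, implements_of_ker_trivial u P μ hμ α hα hsupp E hker, ?_⟩
    intro n E' hE' himp hsub
    rw [hker]
    apply le_antisymm
    · rw [← hker]; exact hsub
    · rintro v rfl; exact zero_mem_kerSet E'
end

section
/- In the prior-free model with the payoff-irrelevance assumption, for every prior ν ∈ P there exists ν' ∈ P such that (i) ⟨α, ν'⟩ = ⟨α, ν⟩ for all actions α, and (ii) μ + λ(ν' − μ) ∈ P implies λ ≤ 1. -/
open Finset

/-- under the payoff-irrelevance assumption, every prior `ν ∈ P` has a
payoff-equivalent counterpart `ν' ∈ P` such that `μ + λ(ν' − μ) ∈ P` forces `λ ≤ 1`. -/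
theorem stmt11 {A Ω : Type*} [Fintype A] [Fintype Ω] [Nonempty A] [Nonempty Ω]
    (u : A → Ω → ℝ) (P : Set (Ω → ℝ)) (μ : Ω → ℝ)
    (hPconv : Convex ℝ P) (hPs : P ⊆ stdSimplex ℝ Ω) (hμ : μ ∈ P)
    (hirr : Irrelevance u P)
    (ν : Ω → ℝ) (hν : ν ∈ P) :
    ∃ ν' ∈ P, (∀ α, pay u α ν' = pay u α ν) ∧
      ∀ lam : ℝ, μ + lam • (ν' - μ) ∈ P → lam ≤ 1 := by
  classical
  have hμs := hPs hμ
  have hνs := hPs hν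
  -- find a state with positive μ mass
  have hsum : ∑ s, μ s = 1 := hμs.2
  have hex : ∃ ω : Ω, μ ω ≠ 0 := by
    by_contra h
    push_neg at h
    simp [h] at hsum
  obtain ⟨ω, hω0⟩ := hex
  have hωpos : 0 < μ ω := lt_of_le_of_ne (hμs.1 ω) (Ne.symm hω0)
  obtain ⟨ω', hne, hupair, hswap⟩ := hirr ω
  set ν' : Ω → ℝ :=
    fun s => ν s + ν ω * ((if s = ω' then (1:ℝ) else 0) - (if s = ω then 1 else 0)) with hν'def
  have hν'ω : ν' ω = 0 := by simp [hν'def, hne.symm]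
  -- key sum identity
  have key : ∀ g : Ω → ℝ, g ω = g ω' → ∑ s, g s * ν' s = ∑ s, g s * ν s := by
    intro g hg
    simp only [hν'def, mul_add, mul_sub, Finset.sum_add_distrib, Finset.sum_sub_distrib,
      mul_ite, mul_one, mul_zero, Finset.sum_ite_eq', Finset.mem_univ, if_true]
    rw [hg]; ring
  have hν'sum : ∑ s, ν' s = 1 := by
    have := key (fun _ => 1) rfl
    simpa [hνs.2] using this
  have hν'nn : ∀ t : Ω, 0 ≤ ν' t := by
    intro t
    by_cases h1 : t = ω
    · rw [h1, hν'ω]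
    by_cases h2 : t = ω'
    · simp only [hν'def, if_pos h2, if_neg h1]
      have e1 := hνs.1 ω
      have e2 := hνs.1 t
      nlinarith
    · simp only [hν'def, if_neg h2, if_neg h1]
      have e2 := hνs.1 t
      nlinarith
  have hν'std : ν' ∈ stdSimplex ℝ Ω := ⟨hν'nn, hν'sum⟩
  have hν'P : ν' ∈ P := by
    have := hswap ν ν' hνs hν'std ?_
    · exact this.mp hν
    · intro s hs hs'
      simp [hν'def, hs, hs']
  refine ⟨ν', hν'P, ?_, ?_⟩
  · intro α
    unfold pay
    refine Finset.sum_congr rfl fun a _ => ?_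
    rw [← Finset.mul_sum, ← Finset.mul_sum]
    congr 1
    exact key (u a) (hupair a)
  · intro lam hmem
    have h0 : 0 ≤ (μ + lam • (ν' - μ)) ω := (hPs hmem).1 ω
    simp only [Pi.add_apply, Pi.smul_apply, Pi.sub_apply, hν'ω, smul_eq_mul] at h0
    nlinarith
end

section
/- In any treatment-effects model, every action α ∈ Δ(T) is implementable: there exists a prior ν in the admissible set P (distributions consistent with the assignment mechanism) such that α maximizes expected payoff under ν and ⟨α, μ⟩ ≥ ⟨α, ν⟩. -/
open Finset

/-- Inverse-propensity-weighted utility `u(a,(y,x,t)) = y·1{a=t}/P(t|x)` of the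
decision maker in the treatment-effects model. -/
noncomputable def teU {Yt X T : Type*} [DecidableEq T] (yval : Yt → ℝ) (p : X → T → ℝ)
    (a : T) (ω : Yt × X × T) : ℝ :=
  yval ω.1 * (if a = ω.2.2 then 1 else 0) / p ω.2.1 ω.2.2

/-- Expected payoff `⟨α, ν⟩` of a mixed action `α ∈ Δ(T)` against `ν ∈ Δ(Ω)`. -/
noncomputable def tePay {Yt X T : Type*} [Fintype Yt] [Fintype X] [Fintype T] [DecidableEq T]
    (yval : Yt → ℝ) (p : X → T → ℝ) (α : T → ℝ) (ν : Yt × X × T → ℝ) : ℝ :=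
  ∑ a, ∑ ω, α a * (teU yval p a ω * ν ω)

/-- The admissible set `P`: distributions on `Ω = Y × X × T` consistent with the
assignment mechanism, i.e. `ν(t|x) = P(t|x)`, written multiplicatively as
`ν(t,x) = P(t|x)·ν(x)`. -/
def teP {Yt X T : Type*} [Fintype Yt] [Fintype X] [Fintype T]
    (p : X → T → ℝ) : Set (Yt × X × T → ℝ) :=
  {ν ∈ stdSimplex ℝ (Yt × X × T) |
    ∀ t x, (∑ y, ν (y, x, t)) = p x t * ∑ τ, ∑ y, ν (y, x, τ)}

/-- Payoff of a product prior `ν(y,x,t) = q(y)·r(x)·p(x,t)` factorizes. -/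
lemma tePay_prod {Yt X T : Type*} [Fintype Yt] [Fintype X] [Fintype T] [DecidableEq T]
    (yval : Yt → ℝ) (p : X → T → ℝ) (hp : ∀ x t, p x t ≠ 0)
    (β : T → ℝ) (q : Yt → ℝ) (r : X → ℝ) :
    tePay yval p β (fun ω => q ω.1 * (r ω.2.1 * p ω.2.1 ω.2.2)) =
      (∑ a, β a) * ((∑ y, q y * yval y) * (∑ x, r x)) := by
  unfold tePay teU
  simp only [Fintype.sum_prod_type]
  have key : ∀ a y x, (∑ t, β a * (yval y * (if a = t then (1:ℝ) else 0) / p x t *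
      (q y * (r x * p x t)))) = β a * (q y * yval y * r x) := by
    intro a y x
    have : ∀ t, β a * (yval y * (if a = t then (1:ℝ) else 0) / p x t *
        (q y * (r x * p x t))) = if a = t then β a * (q y * yval y * r x) else 0 := by
      intro t
      split_ifs with h
      · field_simp [hp x t]
      · simp
    rw [Finset.sum_congr rfl (fun t _ => this t), Finset.sum_ite_eq univ a,
      if_pos (mem_univ a)]
  calc (∑ a, ∑ y, ∑ x, ∑ t, β a * (yval y * (if a = t then (1:ℝ) else 0) / p x t *
          (q y * (r x * p x t))))
      = ∑ a, ∑ y, ∑ x, β a * (q y * yval y * r x) := by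
        refine Finset.sum_congr rfl fun a _ => Finset.sum_congr rfl fun y _ =>
          Finset.sum_congr rfl fun x _ => key a y x
    _ = ∑ a, β a * ((∑ y, q y * yval y) * (∑ x, r x)) := by
        refine Finset.sum_congr rfl fun a _ => ?_
        rw [Finset.sum_mul_sum]
        simp [Finset.mul_sum, mul_assoc]
    _ = (∑ a, β a) * ((∑ y, q y * yval y) * (∑ x, r x)) := by
        rw [← Finset.sum_mul]

/-- Payoff of `α` against `μ` expanded as an IPW-weighted sum of outcome values. -/
lemma tePay_expand {Yt X T : Type*} [Fintype Yt] [Fintype X] [Fintype T] [DecidableEq T]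
    (yval : Yt → ℝ) (p : X → T → ℝ)
    (α : T → ℝ) (μ : Yt × X × T → ℝ) :
    tePay yval p α μ = ∑ a, ∑ x, ∑ y, yval y * (α a * μ (y, x, a) / p x a) := by
  unfold tePay teU
  simp only [Fintype.sum_prod_type]
  have key : ∀ a y x, (∑ t, α a * (yval y * (if a = t then (1:ℝ) else 0) / p x t *
      μ (y, x, t))) = yval y * (α a * μ (y, x, a) / p x a) := by
    intro a y x
    have : ∀ t, α a * (yval y * (if a = t then (1:ℝ) else 0) / p x t * μ (y, x, t)) =
        if a = t then yval y * (α a * μ (y, x, t) / p x t) else 0 := by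
      intro t
      split_ifs with h
      · ring
      · simp
    rw [Finset.sum_congr rfl (fun t _ => this t), Finset.sum_ite_eq univ a,
      if_pos (mem_univ a)]
  calc (∑ a, ∑ y, ∑ x, ∑ t, α a * (yval y * (if a = t then (1:ℝ) else 0) / p x t *
          μ (y, x, t)))
      = ∑ a, ∑ y, ∑ x, yval y * (α a * μ (y, x, a) / p x a) := by
        refine Finset.sum_congr rfl fun a _ => Finset.sum_congr rfl fun y _ =>
          Finset.sum_congr rfl fun x _ => key a y x
    _ = ∑ a, ∑ x, ∑ y, yval y * (α a * μ (y, x, a) / p x a) :=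
        Finset.sum_congr rfl fun a _ => Finset.sum_comm

/-- Any value in the interval spanned by achieved outcome values is the mean of
some distribution on outcomes. -/
lemma exists_q {Yt : Type*} [Fintype Yt] [DecidableEq Yt] (yval : Yt → ℝ) (c : ℝ)
    (y0 y1 : Yt) (h0 : yval y0 ≤ c) (h1 : c ≤ yval y1) :
    ∃ q : Yt → ℝ, (∀ y, 0 ≤ q y) ∧ (∑ y, q y) = 1 ∧ (∑ y, q y * yval y) = c := by
  by_cases hle : yval y1 ≤ yval y0
  · -- degenerate case: c = yval y0
    have hc : c = yval y0 := le_antisymm (h1.trans hle) h0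
    refine ⟨fun y => if y = y0 then 1 else 0, fun y => by dsimp only; split_ifs <;> norm_num,
      by simp, ?_⟩
    simp [ite_mul, hc]
  · push_neg at hle
    set θ : ℝ := (c - yval y0) / (yval y1 - yval y0) with hθ
    have hd : (0:ℝ) < yval y1 - yval y0 := by linarith
    have hθ0 : 0 ≤ θ := div_nonneg (by linarith) hd.le
    have hθ1 : θ ≤ 1 := by
      rw [hθ, div_le_one hd]; linarith
    refine ⟨fun y => (if y = y0 then 1 - θ else 0) + (if y = y1 then θ else 0),
      fun y => by dsimp only; split_ifs <;> simp <;> linarith, ?_, ?_⟩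
    · rw [Finset.sum_add_distrib]
      simp [Finset.sum_ite_eq']
    · have : (∑ y, ((if y = y0 then 1 - θ else 0) + (if y = y1 then θ else 0)) * yval y)
          = (1 - θ) * yval y0 + θ * yval y1 := by
        simp only [add_mul, ite_mul, zero_mul]
        rw [Finset.sum_add_distrib]
        simp [Finset.sum_ite_eq']
      rw [this, hθ]
      field_simp
      ring

/-- in any treatment-effects model every mixed action `α ∈ Δ(T)` is
implementable: there is a supporting prior `ν` in the admissible set `P`, i.e. `α`
maximizes expected payoff under `ν` and `⟨α, μ⟩ ≥ ⟨α, ν⟩`. -/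
theorem stmt14 {Yt X T : Type*} [Fintype Yt] [Fintype X] [Fintype T] [DecidableEq T]
    [Nonempty Yt] [Nonempty X] [Nonempty T]
    (hT : 2 ≤ Fintype.card T) (hY : 2 ≤ Fintype.card Yt) (hX : 2 ≤ Fintype.card X)
    (yval : Yt → ℝ) (p : X → T → ℝ)
    (hp : ∀ x t, 0 < p x t ∧ p x t < 1) (hp1 : ∀ x, ∑ t, p x t = 1)
    (μ : Yt × X × T → ℝ) (hμ : μ ∈ teP p)
    (α : T → ℝ) (hα : α ∈ stdSimplex ℝ T) :
    ∃ ν ∈ teP p,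
      (∀ β ∈ stdSimplex ℝ T, tePay yval p β ν ≤ tePay yval p α ν) ∧
      tePay yval p α ν ≤ tePay yval p α μ := by
  classical
  obtain ⟨⟨hμ0, hμ1⟩, hμm⟩ := hμ
  obtain ⟨hα0, hα1⟩ := hα
  have hpne : ∀ x t, p x t ≠ 0 := fun x t => (hp x t).1.ne'
  set c := tePay yval p α μ with hc
  -- mass of the x-marginal of μ is 1
  have hm1 : ∑ x, ∑ τ, ∑ y, μ (y, x, τ) = 1 := by
    rw [← hμ1]
    simp only [Fintype.sum_prod_type]
    calc (∑ x : X, ∑ τ : T, ∑ y : Yt, μ (y, x, τ))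
        = ∑ x : X, ∑ y : Yt, ∑ τ : T, μ (y, x, τ) :=
          Finset.sum_congr rfl fun x _ => Finset.sum_comm
      _ = ∑ y : Yt, ∑ x : X, ∑ τ : T, μ (y, x, τ) := Finset.sum_comm
  -- weights are nonnegative and sum to 1
  have hwnn : ∀ a x y, 0 ≤ α a * μ (y, x, a) / p x a := fun a x y =>
    div_nonneg (mul_nonneg (hα0 a) (hμ0 _)) (hp x a).1.le
  have hwsum : (∑ a, ∑ x, ∑ y, α a * μ (y, x, a) / p x a) = 1 := by
    have hinner : ∀ a x, (∑ y, α a * μ (y, x, a) / p x a)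
        = α a * ∑ τ, ∑ y, μ (y, x, τ) := by
      intro a x
      rw [← Finset.sum_div, ← Finset.mul_sum, hμm a x]
      field_simp [hpne x a]
    calc (∑ a, ∑ x, ∑ y, α a * μ (y, x, a) / p x a)
        = ∑ a, ∑ x, α a * ∑ τ, ∑ y, μ (y, x, τ) := by
          exact Finset.sum_congr rfl fun a _ => Finset.sum_congr rfl fun x _ => hinner a x
      _ = ∑ a, α a * ∑ x, ∑ τ, ∑ y, μ (y, x, τ) := by
          exact Finset.sum_congr rfl fun a _ => (Finset.mul_sum _ _ _).symm
      _ = 1 := by rw [hm1]; simp [hα1]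
  -- c lies between the extreme outcome values
  obtain ⟨y0, -, hy0⟩ := Finset.exists_min_image univ yval univ_nonempty
  obtain ⟨y1, -, hy1⟩ := Finset.exists_max_image univ yval univ_nonempty
  have hcexp : c = ∑ a, ∑ x, ∑ y, yval y * (α a * μ (y, x, a) / p x a) :=
    tePay_expand yval p α μ
  have hlo : yval y0 ≤ c := by
    rw [hcexp]
    calc yval y0 = ∑ a, ∑ x, ∑ y, yval y0 * (α a * μ (y, x, a) / p x a) := by
          simp only [← Finset.mul_sum]; rw [hwsum, mul_one]
      _ ≤ _ := by
          refine Finset.sum_le_sum fun a _ => Finset.sum_le_sum fun x _ =>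
            Finset.sum_le_sum fun y _ =>
            mul_le_mul_of_nonneg_right (hy0 y (mem_univ y)) (hwnn a x y)
  have hhi : c ≤ yval y1 := by
    rw [hcexp]
    calc (∑ a, ∑ x, ∑ y, yval y * (α a * μ (y, x, a) / p x a))
        ≤ ∑ a, ∑ x, ∑ y, yval y1 * (α a * μ (y, x, a) / p x a) := by
          refine Finset.sum_le_sum fun a _ => Finset.sum_le_sum fun x _ =>
            Finset.sum_le_sum fun y _ =>
            mul_le_mul_of_nonneg_right (hy1 y (mem_univ y)) (hwnn a x y)
      _ = yval y1 := by simp only [← Finset.mul_sum]; rw [hwsum, mul_one]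
  obtain ⟨q, hq0, hq1, hqc⟩ := exists_q yval c y0 y1 hlo hhi
  -- the supporting prior: product of q with the uniform x-marginal and the mechanism
  set r : X → ℝ := fun _ => (Fintype.card X : ℝ)⁻¹ with hr
  have hcX : (Fintype.card X : ℝ) ≠ 0 := Nat.cast_ne_zero.mpr Fintype.card_ne_zero
  have hr1 : (∑ x, r x) = 1 := by
    simp [hr, Finset.card_univ, hcX]
  refine ⟨fun ω => q ω.1 * (r ω.2.1 * p ω.2.1 ω.2.2), ⟨⟨?_, ?_⟩, ?_⟩, ?_, ?_⟩
  · intro ω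
    exact mul_nonneg (hq0 _) (mul_nonneg (by positivity) (hp _ _).1.le)
  · -- total mass 1
    have h1 : ∀ y x, (∑ t, q y * (r x * p x t)) = q y * r x := by
      intro y x
      rw [← Finset.mul_sum, ← Finset.mul_sum, hp1, mul_one]
    simp only [Fintype.sum_prod_type]
    calc (∑ y, ∑ x, ∑ t, q y * (r x * p x t))
        = ∑ y, ∑ x, q y * r x :=
          Finset.sum_congr rfl fun y _ => Finset.sum_congr rfl fun x _ => h1 y x
      _ = (∑ y, q y) * (∑ x, r x) := (Finset.sum_mul_sum _ _ _ _).symm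
      _ = 1 := by rw [hq1, hr1, mul_one]
  · -- marginal condition
    intro t x
    dsimp only
    have key : ∀ τ, (∑ y, q y * (r x * p x τ)) = r x * p x τ := by
      intro τ; rw [← Finset.sum_mul, hq1, one_mul]
    rw [key t, Finset.sum_congr rfl fun τ _ => key τ, ← Finset.mul_sum, hp1]
    ring
  · -- α is optimal under ν
    intro β hβ
    rw [tePay_prod yval p hpne β q r, tePay_prod yval p hpne α q r, hβ.2, hα1]
  · -- ⟨α, ν⟩ ≤ ⟨α, μ⟩
    rw [tePay_prod yval p hpne α q r, hα1, hqc, hr1, one_mul, mul_one]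
end
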